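/- Let Ω ⊂ ℝ^N be a bounded Lipschitz domain, 0 < δ < |Ω|, β > δ/(|Ω|−δ), and δ/β < ε < |Ω|−δ. Then the optimal design value Λ(β,δ) and the spectral drop value M(δ) satisfy M(δ+ε)(1 − √(δ/(εβ)))² ≤ Λ(β,δ) ≤ M(δ). -/

import Mathlib

open MeasureTheory Metric Set Real
open Filter Bornology Topology
set_option maxHeartbeats 1000000

noncomputable section

/-- Points of the Euclidean plane. -/
abbrev Pt := EuclideanSpace ℝ (Fin 2)

/-- Planar cross product. -/
def cross2 (a b : Pt) : ℝ := a 0 * b 1 - a 1 * b 0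

/-- A (strictly) convex polygon with `n + 3` vertices, listed in counterclockwise order:
for every edge, all other vertices lie strictly on its left. -/
structure ConvexPolygon (n : ℕ) where
  v : Fin (n + 3) → Pt
  convex : ∀ i j : Fin (n + 3), j ≠ i → j ≠ i + 1 →
    0 < cross2 (v (i + 1) - v i) (v j - v i)

namespace ConvexPolygon

variable {n : ℕ} (P : ConvexPolygon n)

/-- The closed region bounded by the polygon. -/
def region : Set Pt := convexHull ℝ (Set.range P.v)

/-- The closed edges of the polygon. -/
def edge (i : Fin (n + 3)) : Set Pt := segment ℝ (P.v i) (P.v (i + 1))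

/-- The interior angle at the `i`-th vertex. -/
def angle (i : Fin (n + 3)) : ℝ := EuclideanGeometry.angle (P.v (i - 1)) (P.v i) (P.v (i + 1))

/-- The smallest interior angle. -/
def alphaMin : ℝ := ⨅ i, P.angle i

/-- The minimal distance from a vertex `e i ∩ e j` to a third edge `e k`. -/
def dmin : ℝ := sInf { r : ℝ | ∃ i j k : Fin (n + 3), i ≠ j ∧ i ≠ k ∧ j ≠ k ∧
    ∃ p ∈ P.edge i ∩ P.edge j, r = Metric.infDist p (P.edge k) }

/-- The threshold `δ̄ = d² / (2 α_min)`. -/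
def deltaBar : ℝ := P.dmin ^ 2 / (2 * P.alphaMin)

end ConvexPolygon

/-- De Giorgi perimeter of `D` relative to `Ω`, defined by duality with compactly supported
`C¹` vector fields supported in `Ω` and bounded by `1`. -/
def relPerimeter {N : ℕ} (D Ω : Set (EuclideanSpace ℝ (Fin N))) : ℝ :=
  sSup { p : ℝ | ∃ φ : EuclideanSpace ℝ (Fin N) → EuclideanSpace ℝ (Fin N),
    ContDiff ℝ 1 φ ∧ HasCompactSupport φ ∧ tsupport φ ⊆ Ω ∧ (∀ x, ‖φ x‖ ≤ 1) ∧
    p = ∫ x in D, ∑ i, fderiv ℝ φ x (EuclideanSpace.single i 1) i }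

/-- The relative isoperimetric ratio `P(D,Ω) / (2 |D|^{1/2})`. -/
def isoRatio {N : ℕ} (D Ω : Set (EuclideanSpace ℝ (Fin N))) : ℝ :=
  relPerimeter D Ω / (2 * Real.sqrt (volume D).toReal)

/-- The isoperimetric profile `I(Ω, δ)`. -/
def isoProfile {N : ℕ} (Ω : Set (EuclideanSpace ℝ (Fin N))) (δ : ℝ) : ℝ :=
  sInf { r : ℝ | ∃ D : Set (EuclideanSpace ℝ (Fin N)),
    D ⊆ Ω ∧ MeasurableSet D ∧ (volume D).toReal = δ ∧ r = isoRatio D Ω }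

/-- `K(Ω, δ) = inf_{0 < δ' ≤ δ} I(Ω, δ')`. -/
def isoK {N : ℕ} (Ω : Set (EuclideanSpace ℝ (Fin N))) (δ : ℝ) : ℝ :=
  sInf { r : ℝ | ∃ δ' : ℝ, 0 < δ' ∧ δ' ≤ δ ∧ r = isoProfile Ω δ' }

/-- A bounded Lipschitz domain: open, bounded, connected, and near each boundary point the set
is the sublevel set of a Lipschitz function. -/
def IsLipschitzDomain {N : ℕ} (Ω : Set (EuclideanSpace ℝ (Fin N))) : Prop :=
  IsOpen Ω ∧ Bornology.IsBounded Ω ∧ IsConnected Ω ∧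
    ∀ x ∈ frontier Ω, ∃ U ∈ nhds x, ∃ g : EuclideanSpace ℝ (Fin N) → ℝ, ∃ K,
      LipschitzWith K g ∧ Ω ∩ U = {y ∈ U | g y < 0}

/-- Admissible Rayleigh-quotient values for the weighted eigenvalue `λ(β, D)` in `Ω`. -/
def lambdaSet {N : ℕ} (Ω D : Set (EuclideanSpace ℝ (Fin N))) (β : ℝ) : Set ℝ :=
  { r : ℝ | ∃ u : EuclideanSpace ℝ (Fin N) → ℝ, (∃ K, LipschitzOnWith K u Ω) ∧
    β * ∫ x in Ω \ D, (u x) ^ 2 < ∫ x in D, (u x) ^ 2 ∧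
    r = (∫ x in Ω, ‖fderiv ℝ u x‖ ^ 2) /
      ((∫ x in D, (u x) ^ 2) - β * ∫ x in Ω \ D, (u x) ^ 2) }

/-- The weighted eigenvalue `λ(β, D)` (weight `1` on `D`, `-β` outside). -/
def lambdaEV {N : ℕ} (Ω D : Set (EuclideanSpace ℝ (Fin N))) (β : ℝ) : ℝ :=
  sInf (lambdaSet Ω D β)

/-- The mixed Dirichlet–Neumann eigenvalue `μ(D, Ω)`. -/
def muEV {N : ℕ} (Ω D : Set (EuclideanSpace ℝ (Fin N))) : ℝ :=
  sInf { r : ℝ | ∃ u : EuclideanSpace ℝ (Fin N) → ℝ, (∃ K, LipschitzOnWith K u Ω) ∧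
    (∀ x ∈ Ω \ D, u x = 0) ∧ (∫ x in Ω, (u x) ^ 2) ≠ 0 ∧
    r = (∫ x in Ω, ‖fderiv ℝ u x‖ ^ 2) / ∫ x in Ω, (u x) ^ 2 }

/-- The optimal design value `Λ(β, δ)`. -/
def LambdaOpt {N : ℕ} (Ω : Set (EuclideanSpace ℝ (Fin N))) (β δ : ℝ) : ℝ :=
  sInf { r : ℝ | ∃ D : Set (EuclideanSpace ℝ (Fin N)),
    D ⊆ Ω ∧ MeasurableSet D ∧ (volume D).toReal = δ ∧ r = lambdaEV Ω D β }

/-- `D` is (quasi-)open relative to `Ω`. -/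
def RelOpen {N : ℕ} (Ω D : Set (EuclideanSpace ℝ (Fin N))) : Prop :=
  ∃ U, IsOpen U ∧ D = U ∩ Ω

/-- The spectral drop value `M(δ)`. -/
def Mdrop {N : ℕ} (Ω : Set (EuclideanSpace ℝ (Fin N))) (δ : ℝ) : ℝ :=
  sInf { r : ℝ | ∃ D : Set (EuclideanSpace ℝ (Fin N)),
    D ⊆ Ω ∧ RelOpen Ω D ∧ (volume D).toReal = δ ∧ r = muEV Ω D }

/-- The first Dirichlet eigenvalue of the Laplacian on the unit disk. -/
def lam1Dir : ℝ := muEV (Metric.ball (0 : Pt) 2) (Metric.ball (0 : Pt) 1)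

/-- The open planar cone of opening `α` at the origin. -/
def cone (α : ℝ) : Set Pt :=
  { x : Pt | ∃ r θ : ℝ, 0 < r ∧ 0 < θ ∧ θ < α ∧
    x 0 = r * Real.cos θ ∧ x 1 = r * Real.sin θ }


variable {N : ℕ}

/-- If there is a subset of strictly intermediate volume, the dimension is positive. -/
lemma aux_dim_pos {D Ω : Set (EuclideanSpace ℝ (Fin N))} (hDΩ : D ⊆ Ω)
    (h1 : 0 < (volume D).toReal) (h2 : (volume D).toReal < (volume Ω).toReal) : N ≠ 0 := by
  intro h
  subst h
  have hsub : Subsingleton (EuclideanSpace ℝ (Fin 0)) := inferInstance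
  rcases D.eq_empty_or_nonempty with hD | ⟨x, hx⟩
  · rw [hD] at h1; simp at h1
  · have hDuniv : D = univ := by
      ext y; simpa [Subsingleton.elim y x] using hx
    have hΩuniv : Ω = univ := univ_subset_iff.1 (hDuniv ▸ hDΩ)
    rw [hDuniv, hΩuniv] at h2
    exact lt_irrefl _ h2

/-- Lipschitz functions are bounded on bounded sets. -/
lemma aux_lip_bound {u : EuclideanSpace ℝ (Fin N) → ℝ} {K : NNReal}
    {Ω : Set (EuclideanSpace ℝ (Fin N))} (hu : LipschitzOnWith K u Ω) (hb : IsBounded Ω) :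
    ∃ C : ℝ, ∀ x ∈ Ω, |u x| ≤ C := by
  rcases Ω.eq_empty_or_nonempty with h | ⟨x₀, hx₀⟩
  · exact ⟨0, by simp [h]⟩
  · obtain ⟨R, hR⟩ := hb.subset_closedBall x₀
    refine ⟨|u x₀| + K * R, fun x hx => ?_⟩
    have h1 : dist (u x) (u x₀) ≤ K * dist x x₀ := hu.dist_le_mul x hx x₀ hx₀
    have h2 : dist x x₀ ≤ R := hR hx
    have h3 : |u x - u x₀| ≤ K * R := by
      rw [← Real.dist_eq]
      calc dist (u x) (u x₀) ≤ K * dist x x₀ := h1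
        _ ≤ K * R := by
            have : (0:ℝ) ≤ K := K.coe_nonneg
            nlinarith
    calc |u x| = |u x₀ + (u x - u x₀)| := by ring_nf
      _ ≤ |u x₀| + |u x - u x₀| := abs_add_le _ _
      _ ≤ |u x₀| + K * R := by linarith

/-- u² is integrable on a measurable subset of a bounded set where u is Lipschitz. -/
lemma aux_sq_int {u : EuclideanSpace ℝ (Fin N) → ℝ} {K : NNReal}
    {Ω s : Set (EuclideanSpace ℝ (Fin N))} (hu : LipschitzOnWith K u Ω) (hΩo : IsOpen Ω)
    (hb : IsBounded Ω) (hs : MeasurableSet s) (hsub : s ⊆ Ω) :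
    IntegrableOn (fun x => u x ^ 2) s := by
  obtain ⟨C, hC⟩ : ∃ C : ℝ, ∀ x ∈ Ω, |u x| ≤ C := by
    rcases Ω.eq_empty_or_nonempty with h | ⟨x₀, hx₀⟩
    · exact ⟨0, by simp [h]⟩
    · obtain ⟨R, hR⟩ := hb.subset_closedBall x₀
      refine ⟨|u x₀| + K * R, fun x hx => ?_⟩
      have h1 : dist (u x) (u x₀) ≤ K * dist x x₀ := hu.dist_le_mul x hx x₀ hx₀
      have h2 : dist x x₀ ≤ R := hR hx
      have h0 : (0:ℝ) ≤ K := K.coe_nonneg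
      rw [Real.dist_eq] at h1
      have := abs_sub_abs_le_abs_sub (u x) (u x₀)
      nlinarith [abs_nonneg (u x - u x₀), dist_nonneg (x := x) (y := x₀)]
  have hfin : volume s ≠ ⊤ :=
    ((measure_mono hsub).trans_lt hb.measure_lt_top).ne
  have hcont : ContinuousOn (fun x => u x ^ 2) s :=
    ((hu.continuousOn).mono hsub).pow 2
  refine Integrable.mono' (g := fun _ => C ^ 2) (integrableOn_const hfin)
    (hcont.aestronglyMeasurable hs) ?_
  refine (ae_restrict_iff' hs).2 (Filter.Eventually.of_forall fun x hx => ?_)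
  have := hC x (hsub hx)
  have h2 : |u x| ^ 2 ≤ C ^ 2 := by
    have := abs_nonneg (u x)
    nlinarith
  calc ‖u x ^ 2‖ = |u x| ^ 2 := by rw [Real.norm_eq_abs, abs_pow]
    _ ≤ C ^ 2 := h2

/-- ‖fderiv u‖² is integrable on Ω. -/
lemma aux_fderiv_int {u : EuclideanSpace ℝ (Fin N) → ℝ} {K : NNReal}
    {Ω : Set (EuclideanSpace ℝ (Fin N))} (hu : LipschitzOnWith K u Ω) (hΩo : IsOpen Ω)
    (hb : IsBounded Ω) :
    IntegrableOn (fun x => ‖fderiv ℝ u x‖ ^ 2) Ω := by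
  have hfin : volume Ω ≠ ⊤ := hb.measure_lt_top.ne
  have hmeas : AEStronglyMeasurable (fun x => ‖fderiv ℝ u x‖ ^ 2) (volume.restrict Ω) := by
    exact ((measurable_fderiv ℝ u).norm.pow_const 2).aestronglyMeasurable
  refine Integrable.mono' (g := fun _ => (K:ℝ) ^ 2) (integrableOn_const hfin)
    hmeas ?_
  refine (ae_restrict_iff' hΩo.measurableSet).2 (Filter.Eventually.of_forall fun x hx => ?_)
  have h1 : ‖fderiv ℝ u x‖ ≤ K := norm_fderiv_le_of_lipschitzOn ℝ (hΩo.mem_nhds hx) hu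
  have h0 := norm_nonneg (fderiv ℝ u x)
  have : ‖‖fderiv ℝ u x‖ ^ 2‖ = ‖fderiv ℝ u x‖ ^ 2 := by
    rw [Real.norm_eq_abs, abs_of_nonneg (by positivity)]
  show ‖‖fderiv ℝ u x‖ ^ 2‖ ≤ (K:ℝ) ^ 2
  rw [this]
  nlinarith

lemma aux_lambdaSet_nonneg {Ω D : Set (EuclideanSpace ℝ (Fin N))} (hΩ : MeasurableSet Ω)
    {β : ℝ} {r : ℝ} (hr : r ∈ lambdaSet Ω D β) : 0 ≤ r := by
  obtain ⟨u, _, hlt, rfl⟩ := hr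
  have hnum : 0 ≤ ∫ x in Ω, ‖fderiv ℝ u x‖ ^ 2 :=
    setIntegral_nonneg hΩ fun x _ => by positivity
  have hden : 0 ≤ (∫ x in D, u x ^ 2) - β * ∫ x in Ω \ D, u x ^ 2 := by linarith
  exact div_nonneg hnum hden

lemma aux_lambdaEV_nonneg {Ω D : Set (EuclideanSpace ℝ (Fin N))} (hΩ : MeasurableSet Ω)
    {β : ℝ} : 0 ≤ lambdaEV Ω D β :=
  Real.sInf_nonneg fun _ hr => aux_lambdaSet_nonneg hΩ hr

lemma aux_muEV_nonneg {Ω D : Set (EuclideanSpace ℝ (Fin N))} (hΩ : MeasurableSet Ω) :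
    0 ≤ muEV Ω D := by
  refine Real.sInf_nonneg fun r hr => ?_
  obtain ⟨u, _, _, _, rfl⟩ := hr
  exact div_nonneg (setIntegral_nonneg hΩ fun x _ => by positivity)
    (setIntegral_nonneg hΩ fun x _ => by positivity)

lemma aux_Mdrop_nonneg {Ω : Set (EuclideanSpace ℝ (Fin N))} (hΩ : MeasurableSet Ω) {δ : ℝ} :
    0 ≤ Mdrop Ω δ := by
  refine Real.sInf_nonneg fun r hr => ?_
  obtain ⟨D, _, _, _, rfl⟩ := hr
  exact aux_muEV_nonneg hΩ

lemma aux_LambdaOpt_nonneg {Ω : Set (EuclideanSpace ℝ (Fin N))} (hΩ : MeasurableSet Ω)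
    {β δ : ℝ} : 0 ≤ LambdaOpt Ω β δ := by
  refine Real.sInf_nonneg fun r hr => ?_
  obtain ⟨D, _, _, _, rfl⟩ := hr
  exact aux_lambdaEV_nonneg hΩ

lemma aux_nontrivial (hN : N ≠ 0) : Nontrivial (EuclideanSpace ℝ (Fin N)) := by
  haveI : Nonempty (Fin N) := Fin.pos_iff_nonempty.1 (Nat.pos_of_ne_zero hN)
  infer_instance

/-- One can enlarge an open subset of `Ω` by a ball to achieve any prescribed intermediate
relative volume. -/
lemma aux_exists_open (hN : N ≠ 0) {Ω ω : Set (EuclideanSpace ℝ (Fin N))}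
    (hΩo : IsOpen Ω) (hb : IsBounded Ω) (hωo : IsOpen ω) (hsub : ω ⊆ Ω) {t : ℝ}
    (h1 : (volume ω).toReal ≤ t) (h2 : t < (volume Ω).toReal) :
    ∃ U : Set (EuclideanSpace ℝ (Fin N)), IsOpen U ∧ ω ⊆ U ∩ Ω ∧
      (volume (U ∩ Ω)).toReal = t := by
  haveI := aux_nontrivial hN
  have hΩfin : volume Ω ≠ ⊤ := hb.measure_lt_top.ne
  have ht0 : 0 ≤ t := le_trans ENNReal.toReal_nonneg h1
  have hΩne : Ω.Nonempty := by
    rcases Ω.eq_empty_or_nonempty with h | h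
    · rw [h] at h2; simp at h2; linarith
    · exact h
  obtain ⟨x₀, hx₀⟩ := hΩne
  obtain ⟨R₀, hR₀⟩ := hb.subset_ball x₀
  set R : ℝ := max R₀ 0 with hRdef
  have hR0 : (0:ℝ) ≤ R := le_max_right _ _
  have hRsub : Ω ⊆ ball x₀ R := hR₀.trans (ball_subset_ball (le_max_left _ _))
  set c₁ : ℝ := (volume (ball (0 : EuclideanSpace ℝ (Fin N)) 1)).toReal with hc₁
  set g : ℝ → ℝ := fun r => r ^ N * c₁ with hg
  have hball : ∀ r : ℝ, 0 ≤ r → (volume (ball x₀ r)).toReal = g r := by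
    intro r hr
    rw [Measure.addHaar_ball volume x₀ hr, ENNReal.toReal_mul, ENNReal.toReal_ofReal (by positivity)]
    simp [hg, finrank_euclideanSpace_fin]
    exact Or.inl rfl
  set f : ℝ → ℝ := fun r => (volume ((ω ∪ ball x₀ r) ∩ Ω)).toReal with hf
  have hfinA : ∀ r : ℝ, volume ((ω ∪ ball x₀ r) ∩ Ω) ≠ ⊤ := fun r =>
    ((measure_mono inter_subset_right).trans_lt hb.measure_lt_top).ne
  have key : ∀ r r' : ℝ, 0 ≤ r → r ≤ r' → f r ≤ f r' ∧ f r' - f r ≤ g r' - g r := by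
    intro r r' hr hrr
    constructor
    · apply ENNReal.toReal_mono (hfinA r')
      exact measure_mono (inter_subset_inter_left _
        (union_subset_union_right _ (ball_subset_ball hrr)))
    · have hdiff : volume (ball x₀ r' \ ball x₀ r) = volume (ball x₀ r') - volume (ball x₀ r) :=
        measure_diff (ball_subset_ball hrr) measurableSet_ball.nullMeasurableSet
          measure_ball_lt_top.ne
      have hsub2 : (ω ∪ ball x₀ r') ∩ Ω ⊆ ((ω ∪ ball x₀ r) ∩ Ω) ∪ (ball x₀ r' \ ball x₀ r) := by
        rintro x ⟨hx1, hx2⟩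
        rcases hx1 with h | h
        · exact Or.inl ⟨Or.inl h, hx2⟩
        · by_cases hxr : x ∈ ball x₀ r
          · exact Or.inl ⟨Or.inr hxr, hx2⟩
          · exact Or.inr ⟨h, hxr⟩
      have hb1 : volume ((ω ∪ ball x₀ r') ∩ Ω) ≤
          volume ((ω ∪ ball x₀ r) ∩ Ω) + volume (ball x₀ r' \ ball x₀ r) :=
        (measure_mono hsub2).trans (measure_union_le _ _)
      have hdfin : volume (ball x₀ r' \ ball x₀ r) ≠ ⊤ :=
        ((measure_mono diff_subset).trans_lt measure_ball_lt_top).ne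
      have htr : f r' ≤ f r + (volume (ball x₀ r' \ ball x₀ r)).toReal := by
        have := ENNReal.toReal_mono (by
          exact ENNReal.add_ne_top.2 ⟨hfinA r, hdfin⟩) hb1
        rwa [ENNReal.toReal_add (hfinA r) hdfin] at this
      have hdval : (volume (ball x₀ r' \ ball x₀ r)).toReal = g r' - g r := by
        rw [hdiff, ENNReal.toReal_sub_of_le (measure_mono (ball_subset_ball hrr))
          measure_ball_lt_top.ne, hball r hr, hball r' (hr.trans hrr)]
      linarith [htr, hdval.le, hdval.ge]
  have hgc : Continuous g := by fun_prop
  have hcont : ContinuousOn f (Icc 0 R) := by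
    rw [Metric.continuousOn_iff]
    intro a ha ε hε
    obtain ⟨d, hd, hgd⟩ := Metric.continuousAt_iff.1 hgc.continuousAt ε hε
    refine ⟨d, hd, fun y hy hdist => ?_⟩
    have hga := hgd hdist
    rw [Real.dist_eq] at hga ⊢
    rcases le_total y a with h | h
    · obtain ⟨hm, hdle⟩ := key y a hy.1 h
      rw [abs_sub_comm] at hga
      calc |f y - f a| = f a - f y := by rw [abs_of_nonpos (by linarith)]; ring
        _ ≤ g a - g y := hdle
        _ ≤ |g a - g y| := le_abs_self _
        _ < ε := hga
    · obtain ⟨hm, hdle⟩ := key a y ha.1 h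
      calc |f y - f a| = f y - f a := by rw [abs_of_nonneg (by linarith)]
        _ ≤ g y - g a := hdle
        _ ≤ |g y - g a| := le_abs_self _
        _ < ε := hga
  have hf0 : f 0 ≤ t := by
    simpa [hf, ball_zero, inter_eq_self_of_subset_left hsub] using h1
  have hfR : t ≤ f R := by
    have : (ω ∪ ball x₀ R) ∩ Ω = Ω := by
      apply inter_eq_self_of_subset_right
      exact fun x hx => Or.inr (hRsub hx)
    rw [hf]; simp only [this]; linarith
  have := intermediate_value_Icc hR0 hcont
  obtain ⟨r, hrIcc, hfr⟩ := this ⟨hf0, hfR⟩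
  exact ⟨ω ∪ ball x₀ r, hωo.union isOpen_ball,
    subset_inter (subset_union_left) hsub, hfr⟩

/-- The cap function `x ↦ max (r - dist x₀ x) 0` is 1-Lipschitz. -/
lemma aux_cap_lip (x₀ : EuclideanSpace ℝ (Fin N)) (r : ℝ) :
    LipschitzWith 1 (fun x => max (r - dist x₀ x) 0) := by
  have h1 : LipschitzWith 1 (fun t : ℝ => max (r - t) 0) := by
    apply LipschitzWith.of_dist_le_mul
    intro a b
    rw [Real.dist_eq, Real.dist_eq, NNReal.coe_one, one_mul]
    calc |max (r - a) 0 - max (r - b) 0| ≤ |(r - a) - (r - b)| := abs_max_sub_max_le_abs _ _ _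
      _ = |a - b| := by rw [abs_sub_comm]; ring_nf
  have := h1.comp (LipschitzWith.dist_right x₀)
  rwa [one_mul] at this

/-- For every measurable `D ⊆ Ω` of positive measure, the admissible set for `λ(β, D)`
is nonempty (Lebesgue density point argument). -/
lemma aux_lambdaSet_nonempty {Ω D : Set (EuclideanSpace ℝ (Fin N))}
    (hΩo : IsOpen Ω) (hb : IsBounded Ω) (hD : MeasurableSet D) (hsub : D ⊆ Ω)
    (hpos : 0 < (volume D).toReal) {β : ℝ} (hβ : 0 < β) :
    (lambdaSet Ω D β).Nonempty := by
  have hΩfin : volume Ω ≠ ⊤ := hb.measure_lt_top.ne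
  have hDfin : volume D ≠ ⊤ := ((measure_mono hsub).trans_lt hb.measure_lt_top).ne
  have hD0 : volume D ≠ 0 := by
    intro h; rw [h] at hpos; simp at hpos
  -- density point
  have hae := Besicovitch.ae_tendsto_measure_inter_div_of_measurableSet volume hD
  obtain ⟨x₀, hx₀D, htend⟩ : ∃ x₀, x₀ ∈ D ∧ Tendsto
      (fun ρ => volume (D ∩ closedBall x₀ ρ) / volume (closedBall x₀ ρ)) (𝓝[>] 0) (𝓝 1) := by
    rw [ae_iff] at hae
    by_contra hcon
    push_neg at hcon
    apply hD0
    refine measure_mono_null (fun x hx => ?_) hae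
    simp only [mem_setOf_eq]
    intro hP
    have := hcon x hx
    rw [indicator_of_mem hx] at hP
    exact this hP
  -- choice of η
  set P : ℝ := 2 ^ (N + 2) with hPdef
  have hP4 : P = 2 ^ N * 4 := by rw [hPdef, pow_add]; norm_num
  have hPpos : 0 < P := by positivity
  set η : ℝ := 1 / (1 + (β + 1) * P) with hηdef
  have hdenpos : 0 < 1 + (β + 1) * P := by positivity
  have hη0 : 0 < η := by positivity
  have hη1 : η < 1 := by
    rw [hηdef, div_lt_one hdenpos]; nlinarith
  have hkey : β * η * P < 1 - η := by
    have h1 : 1 - η = (β + 1) * P * η := by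
      rw [hηdef]; field_simp; ring
    rw [h1]; nlinarith
  -- eventual density bound
  have hlt1 : ENNReal.ofReal (1 - η) < 1 := ENNReal.ofReal_lt_one.2 (by linarith)
  have hev : ∀ᶠ ρ in 𝓝[>] (0:ℝ), ENNReal.ofReal (1 - η) <
      volume (D ∩ closedBall x₀ ρ) / volume (closedBall x₀ ρ) :=
    htend.eventually (isOpen_Ioi.mem_nhds hlt1)
  obtain ⟨d, hd, hIoo⟩ := mem_nhdsGT_iff_exists_Ioo_subset.1 hev
  have hdpos : (0:ℝ) < d := hd
  set r : ℝ := min (d / 2) 1 with hrdef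
  have hr0 : 0 < r := by
    rw [hrdef]; exact lt_min (by linarith) one_pos
  have hrd : r < d := by
    rw [hrdef]
    calc min (d/2) 1 ≤ d/2 := min_le_left _ _
      _ < d := by linarith
  set c₁ : ℝ := (volume (ball (0 : EuclideanSpace ℝ (Fin N)) 1)).toReal with hc₁
  have hc₁pos : 0 < c₁ := ENNReal.toReal_pos (measure_ball_pos volume _ one_pos).ne'
    measure_ball_lt_top.ne
  have hcBval : ∀ ρ : ℝ, 0 ≤ ρ → (volume (closedBall x₀ ρ)).toReal = ρ ^ N * c₁ := by
    intro ρ hρ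
    rw [Measure.addHaar_closedBall volume x₀ hρ, ENNReal.toReal_mul,
      ENNReal.toReal_ofReal (by positivity)]
    simp [finrank_euclideanSpace_fin]
    exact Or.inl rfl
  have hdens : ∀ ρ : ℝ, 0 < ρ → ρ < d →
      (1 - η) * (ρ ^ N * c₁) ≤ (volume (D ∩ closedBall x₀ ρ)).toReal := by
    intro ρ hρ0 hρd
    have hmem := hIoo ⟨hρ0, hρd⟩
    simp only [mem_setOf_eq] at hmem
    have hcB0 : volume (closedBall x₀ ρ) ≠ 0 := (measure_closedBall_pos volume _ hρ0).ne'
    have hcBfin : volume (closedBall x₀ ρ) ≠ ⊤ := measure_closedBall_lt_top.ne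
    have hmul : ENNReal.ofReal (1 - η) * volume (closedBall x₀ ρ) <
        volume (D ∩ closedBall x₀ ρ) :=
      (ENNReal.lt_div_iff_mul_lt (Or.inl hcB0) (Or.inl hcBfin)).1 hmem
    have hfin2 : volume (D ∩ closedBall x₀ ρ) ≠ ⊤ :=
      ((measure_mono inter_subset_right).trans_lt measure_closedBall_lt_top).ne
    have := ENNReal.toReal_mono hfin2 hmul.le
    rw [ENNReal.toReal_mul, ENNReal.toReal_ofReal (by linarith), hcBval ρ hρ0.le] at this
    linarith
  -- the test function
  set u : EuclideanSpace ℝ (Fin N) → ℝ := fun x => max (r - dist x₀ x) 0 with hudef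
  have hulip : LipschitzWith 1 u := aux_cap_lip x₀ r
  have hu0 : ∀ x, 0 ≤ u x := fun x => le_max_right _ _
  have hur : ∀ x, u x ≤ r := fun x => by
    rw [hudef]
    apply max_le _ hr0.le
    have := dist_nonneg (x := x₀) (y := x)
    linarith
  have hucont : Continuous u := hulip.continuous
  have huint : ∀ s : Set (EuclideanSpace ℝ (Fin N)), MeasurableSet s → volume s ≠ ⊤ →
      IntegrableOn (fun x => u x ^ 2) s := by
    intro s hs hfin
    refine Integrable.mono' (g := fun _ => r ^ 2) (integrableOn_const hfin)
      ((hucont.pow 2).aestronglyMeasurable.restrict) ?_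
    refine Filter.Eventually.of_forall fun x => ?_
    have h1 := hu0 x; have h2 := hur x
    show ‖u x ^ 2‖ ≤ r ^ 2
    rw [Real.norm_eq_abs, abs_of_nonneg (by positivity)]
    nlinarith
  -- lower bound on ∫_D u²
  have hAbound : (r/2)^2 * ((1 - η) * ((r/2) ^ N * c₁)) ≤ ∫ x in D, u x ^ 2 := by
    set s₁ := D ∩ closedBall x₀ (r/2) with hs₁
    have hs₁m : MeasurableSet s₁ := hD.inter measurableSet_closedBall
    have hs₁fin : volume s₁ ≠ ⊤ := ((measure_mono inter_subset_left).trans_lt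
      hDfin.lt_top).ne
    have hlow : ∀ x ∈ s₁, (r/2)^2 ≤ u x ^ 2 := by
      rintro x ⟨hxD, hxB⟩
      rw [mem_closedBall, dist_comm] at hxB
      have : r / 2 ≤ u x := le_trans (by linarith) (le_max_left _ _)
      have h2 : 0 ≤ r/2 := by linarith
      nlinarith
    have h1 : (r/2)^2 * (volume s₁).toReal ≤ ∫ x in s₁, u x ^ 2 := by
      have := setIntegral_mono_on (integrableOn_const hs₁fin)
        (huint s₁ hs₁m hs₁fin) hs₁m hlow
      rwa [setIntegral_const, smul_eq_mul, mul_comm] at this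
    have h2 : ∫ x in s₁, u x ^ 2 ≤ ∫ x in D, u x ^ 2 :=
      setIntegral_mono_set (huint D hD hDfin)
        (Filter.Eventually.of_forall fun x => by positivity)
        (HasSubset.Subset.eventuallyLE inter_subset_left)
    have h3 : (1 - η) * ((r/2) ^ N * c₁) ≤ (volume s₁).toReal :=
      hdens (r/2) (by linarith) (by linarith)
    nlinarith [sq_nonneg (r/2)]
  -- upper bound on ∫_{Ω \ D} u²
  have hBbound : ∫ x in Ω \ D, u x ^ 2 ≤ r^2 * (η * (r ^ N * c₁)) := by
    have hΩDm : MeasurableSet (Ω \ D) := hΩo.measurableSet.diff hD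
    have hΩDfin : volume (Ω \ D) ≠ ⊤ := ((measure_mono diff_subset).trans_lt
      hb.measure_lt_top).ne
    have hsplit := integral_inter_add_diff (s := Ω \ D) (t := ball x₀ r)
      measurableSet_ball (huint _ hΩDm hΩDfin)
      (f := fun x => u x ^ 2) (μ := volume)
    have hzero : ∫ x in (Ω \ D) \ ball x₀ r, u x ^ 2 = 0 := by
      rw [setIntegral_congr_fun (hΩDm.diff measurableSet_ball)
        (g := fun _ => (0:ℝ)) ?_]
      · simp
      · intro x hx
        have hxnb : x ∉ ball x₀ r := hx.2
        rw [mem_ball, dist_comm] at hxnb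
        push_neg at hxnb
        have : u x = 0 := max_eq_right (by linarith)
        simp [this]
    have hfirstm : MeasurableSet ((Ω \ D) ∩ ball x₀ r) := hΩDm.inter measurableSet_ball
    have hfirstfin : volume ((Ω \ D) ∩ ball x₀ r) ≠ ⊤ :=
      ((measure_mono inter_subset_left).trans_lt hΩDfin.lt_top).ne
    have hfirst : ∫ x in (Ω \ D) ∩ ball x₀ r, u x ^ 2 ≤
        r ^ 2 * (volume ((Ω \ D) ∩ ball x₀ r)).toReal := by
      have := setIntegral_mono_on (huint _ hfirstm hfirstfin)
        (integrableOn_const hfirstfin) hfirstm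
        (g := fun _ => r ^ 2) (fun x _ => by
          have h1 := hu0 x; have h2 := hur x
          show u x ^ 2 ≤ r ^ 2
          nlinarith)
      rwa [setIntegral_const, smul_eq_mul, mul_comm (volume.real _)] at this
    have hvol : (volume ((Ω \ D) ∩ ball x₀ r)).toReal ≤ η * (r ^ N * c₁) := by
      have hss : (Ω \ D) ∩ ball x₀ r ⊆ closedBall x₀ r \ (D ∩ closedBall x₀ r) := by
        rintro x ⟨⟨hxΩ, hxD⟩, hxB⟩
        exact ⟨ball_subset_closedBall hxB, fun h => hxD h.1⟩
      have hmdiff : volume (closedBall x₀ r \ (D ∩ closedBall x₀ r)) =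
          volume (closedBall x₀ r) - volume (D ∩ closedBall x₀ r) :=
        measure_diff inter_subset_right (hD.inter measurableSet_closedBall).nullMeasurableSet
          (((measure_mono inter_subset_right).trans_lt measure_closedBall_lt_top).ne)
      have h1 : (volume ((Ω \ D) ∩ ball x₀ r)).toReal ≤
          (volume (closedBall x₀ r \ (D ∩ closedBall x₀ r))).toReal := by
        apply ENNReal.toReal_mono ((measure_mono diff_subset).trans_lt
          measure_closedBall_lt_top).ne
        exact measure_mono hss
      rw [hmdiff, ENNReal.toReal_sub_of_le (measure_mono inter_subset_right)
        measure_closedBall_lt_top.ne, hcBval r hr0.le] at h1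
      have h3 := hdens r hr0 hrd
      linarith
    calc ∫ x in Ω \ D, u x ^ 2
        = (∫ x in (Ω \ D) ∩ ball x₀ r, u x ^ 2) + ∫ x in (Ω \ D) \ ball x₀ r, u x ^ 2 :=
          hsplit.symm
      _ = ∫ x in (Ω \ D) ∩ ball x₀ r, u x ^ 2 := by rw [hzero, add_zero]
      _ ≤ r ^ 2 * (volume ((Ω \ D) ∩ ball x₀ r)).toReal := hfirst
      _ ≤ r ^ 2 * (η * (r ^ N * c₁)) := by
          apply mul_le_mul_of_nonneg_left hvol (by positivity)
  -- conclusion: strict inequality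
  have hstrict : β * ∫ x in Ω \ D, u x ^ 2 < ∫ x in D, u x ^ 2 := by
    have h2N : (0:ℝ) < 2 ^ N := by positivity
    have hRHS : (r/2)^2 * ((1 - η) * ((r/2) ^ N * c₁)) =
        (1 - η) * (r ^ 2 * (r ^ N * c₁)) / P := by
      rw [div_pow, div_pow, hP4]
      field_simp
      ring
    have hmid : β * (r^2 * (η * (r ^ N * c₁))) < (1 - η) * (r ^ 2 * (r ^ N * c₁)) / P := by
      rw [lt_div_iff₀ hPpos]
      have hrpos : 0 < r ^ 2 * (r ^ N * c₁) := by positivity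
      nlinarith
    have hβB : β * ∫ x in Ω \ D, u x ^ 2 ≤ β * (r^2 * (η * (r ^ N * c₁))) :=
      mul_le_mul_of_nonneg_left hBbound hβ.le
    rw [hRHS] at hAbound
    linarith
  exact ⟨_, u, ⟨1, hulip.lipschitzOnWith⟩, hstrict, rfl⟩

/-- The admissible set for `μ(D, Ω)`. -/
def muSet {N : ℕ} (Ω D : Set (EuclideanSpace ℝ (Fin N))) : Set ℝ :=
  { r : ℝ | ∃ u : EuclideanSpace ℝ (Fin N) → ℝ, (∃ K, LipschitzOnWith K u Ω) ∧
    (∀ x ∈ Ω \ D, u x = 0) ∧ (∫ x in Ω, (u x) ^ 2) ≠ 0 ∧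
    r = (∫ x in Ω, ‖fderiv ℝ u x‖ ^ 2) / ∫ x in Ω, (u x) ^ 2 }

lemma muEV_eq {N : ℕ} (Ω D : Set (EuclideanSpace ℝ (Fin N))) : muEV Ω D = sInf (muSet Ω D) :=
  rfl

variable {N : ℕ}

/-- A bump supported in an open set of positive measure gives an admissible function. -/
lemma aux_muSet_nonempty {Ω D : Set (EuclideanSpace ℝ (Fin N))} (hΩo : IsOpen Ω)
    (hb : IsBounded Ω) (hDo : IsOpen D) (hDsub : D ⊆ Ω) (hpos : 0 < (volume D).toReal) :
    (muSet Ω D).Nonempty := by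
  have hΩfin : volume Ω ≠ ⊤ := hb.measure_lt_top.ne
  have hDne : D.Nonempty := by
    rcases D.eq_empty_or_nonempty with h | h
    · rw [h] at hpos; simp at hpos
    · exact h
  obtain ⟨x₀, hx₀⟩ := hDne
  obtain ⟨ρ, hρ0, hρball⟩ := Metric.isOpen_iff.1 hDo x₀ hx₀
  set u : EuclideanSpace ℝ (Fin N) → ℝ := fun x => max (ρ/2 - dist x₀ x) 0 with hudef
  have hulip : LipschitzWith 1 u := aux_cap_lip x₀ (ρ/2)
  have hu0 : ∀ x, 0 ≤ u x := fun x => le_max_right _ _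
  have hur : ∀ x, u x ≤ ρ/2 := fun x => by
    rw [hudef]
    apply max_le _ (by linarith)
    have := dist_nonneg (x := x₀) (y := x)
    linarith
  have huzero : ∀ x ∈ Ω \ D, u x = 0 := by
    rintro x ⟨hxΩ, hxD⟩
    have hxnb : x ∉ ball x₀ ρ := fun h => hxD (hρball h)
    rw [mem_ball, dist_comm] at hxnb
    push_neg at hxnb
    exact max_eq_right (by linarith)
  have huint : IntegrableOn (fun x => u x ^ 2) Ω := by
    refine Integrable.mono' (g := fun _ => (ρ/2) ^ 2) (integrableOn_const hΩfin)
      ((hulip.continuous.pow 2).aestronglyMeasurable.restrict) ?_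
    refine Filter.Eventually.of_forall fun x => ?_
    have h1 := hu0 x; have h2 := hur x
    show ‖u x ^ 2‖ ≤ (ρ/2) ^ 2
    rw [Real.norm_eq_abs, abs_of_nonneg (by positivity)]
    nlinarith
  have hIne : (∫ x in Ω, u x ^ 2) ≠ 0 := by
    have hcb : closedBall x₀ (ρ/4) ⊆ Ω := by
      refine subset_trans ?_ (hρball.trans hDsub |>.trans (subset_refl _)) |>.trans (subset_refl _)
      intro y hy
      rw [mem_closedBall] at hy
      rw [mem_ball]
      linarith
    have hlow : ∀ x ∈ closedBall x₀ (ρ/4), (ρ/4)^2 ≤ u x ^ 2 := by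
      intro x hx
      rw [mem_closedBall, dist_comm] at hx
      have h1 : ρ/4 ≤ u x := le_trans (by linarith) (le_max_left _ _)
      nlinarith
    have hcbfin : volume (closedBall x₀ (ρ/4)) ≠ ⊤ := measure_closedBall_lt_top.ne
    have h1 : (ρ/4)^2 * (volume (closedBall x₀ (ρ/4))).toReal ≤
        ∫ x in closedBall x₀ (ρ/4), u x ^ 2 := by
      have := setIntegral_mono_on (integrableOn_const hcbfin)
        (huint.mono_set hcb) measurableSet_closedBall hlow
      rwa [setIntegral_const, smul_eq_mul, mul_comm] at this
    have h2 : ∫ x in closedBall x₀ (ρ/4), u x ^ 2 ≤ ∫ x in Ω, u x ^ 2 :=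
      setIntegral_mono_set huint (Filter.Eventually.of_forall fun x => by positivity)
        (HasSubset.Subset.eventuallyLE hcb)
    have h3 : 0 < (volume (closedBall x₀ (ρ/4))).toReal :=
      ENNReal.toReal_pos (measure_closedBall_pos volume _ (by linarith)).ne' hcbfin
    have : 0 < ∫ x in Ω, u x ^ 2 := by nlinarith [mul_pos (show (0:ℝ) < (ρ/4)^2 by positivity) h3]
    exact this.ne'
  exact ⟨_, u, ⟨1, hulip.lipschitzOnWith⟩, huzero, hIne, rfl⟩

/-- Comparison `λ(β, D) ≤ μ(D, Ω)`. -/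
lemma aux_lambda_le_mu {Ω D : Set (EuclideanSpace ℝ (Fin N))} (hΩo : IsOpen Ω)
    (hb : IsBounded Ω) (hD : MeasurableSet D) (hsub : D ⊆ Ω)
    (hne : (muSet Ω D).Nonempty) {β : ℝ} (hβ : 0 < β) :
    lambdaEV Ω D β ≤ muEV Ω D := by
  rw [muEV_eq]
  apply le_csInf hne
  rintro m ⟨u, ⟨K, hK⟩, hzero, hne2, rfl⟩
  have hint : IntegrableOn (fun x => u x ^ 2) Ω := by
    obtain ⟨C, hC⟩ : ∃ C : ℝ, ∀ x ∈ Ω, |u x| ≤ C := by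
      rcases Ω.eq_empty_or_nonempty with h | ⟨x₀, hx₀⟩
      · exact ⟨0, by simp [h]⟩
      · obtain ⟨R, hR⟩ := hb.subset_closedBall x₀
        refine ⟨|u x₀| + K * R, fun x hx => ?_⟩
        have h1 : dist (u x) (u x₀) ≤ K * dist x x₀ := hK.dist_le_mul x hx x₀ hx₀
        have h2 : dist x x₀ ≤ R := hR hx
        have h0 : (0:ℝ) ≤ K := K.coe_nonneg
        rw [Real.dist_eq] at h1
        have := abs_sub_abs_le_abs_sub (u x) (u x₀)
        nlinarith [abs_nonneg (u x - u x₀), dist_nonneg (x := x) (y := x₀)]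
    refine Integrable.mono' (g := fun _ => C ^ 2)
      (integrableOn_const hb.measure_lt_top.ne)
      (((hK.continuousOn).pow 2).aestronglyMeasurable hΩo.measurableSet) ?_
    refine (ae_restrict_iff' hΩo.measurableSet).2 (Filter.Eventually.of_forall fun x hx => ?_)
    have := hC x hx
    show ‖u x ^ 2‖ ≤ C ^ 2
    rw [Real.norm_eq_abs, abs_pow]
    have := abs_nonneg (u x)
    nlinarith [hC x hx]
  have hB0 : ∫ x in Ω \ D, u x ^ 2 = 0 := by
    rw [setIntegral_congr_fun (hΩo.measurableSet.diff hD) (g := fun _ => (0:ℝ))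
      (fun x hx => by rw [hzero x hx]; ring)]
    simp
  have hsplit := integral_inter_add_diff (s := Ω) (t := D) hD hint (μ := volume)
  rw [inter_eq_self_of_subset_right hsub] at hsplit
  have hDeq : ∫ x in D, u x ^ 2 = ∫ x in Ω, u x ^ 2 := by
    have : (∫ x in D, u x ^ 2) + ∫ x in Ω \ D, u x ^ 2 = ∫ x in Ω, u x ^ 2 := hsplit
    rw [hB0, add_zero] at this
    exact this
  have hpos : 0 < ∫ x in Ω, u x ^ 2 :=
    lt_of_le_of_ne (setIntegral_nonneg hΩo.measurableSet fun x _ => by positivity)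
      (Ne.symm hne2)
  have hmem : (∫ x in Ω, ‖fderiv ℝ u x‖ ^ 2) / ∫ x in Ω, u x ^ 2 ∈ lambdaSet Ω D β := by
    refine ⟨u, ⟨K, hK⟩, ?_, ?_⟩
    · rw [hB0, hDeq]
      simpa using hpos
    · rw [hB0, hDeq]
      ring_nf
  exact csInf_le ⟨0, fun r hr => aux_lambdaSet_nonneg hΩo.measurableSet hr⟩ hmem

lemma aux_muSet_elt_nonneg {Ω D : Set (EuclideanSpace ℝ (Fin N))} (hΩ : MeasurableSet Ω)
    {r : ℝ} (hr : r ∈ muSet Ω D) : 0 ≤ r := by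
  obtain ⟨u, _, _, _, rfl⟩ := hr
  exact div_nonneg (setIntegral_nonneg hΩ fun x _ => by positivity)
    (setIntegral_nonneg hΩ fun x _ => by positivity)


lemma alg_lt_one {δ ε β s : ℝ} (hδεβ : δ < ε * β) (hεβ : 0 < ε * β)
    (hs2 : s ^ 2 = δ / (ε * β)) (hs0 : 0 ≤ s) : s < 1 := by
  nlinarith [hs2, (div_lt_one hεβ).2 hδεβ]

lemma alg_CS {QD ID k δ : ℝ} (h0 : 0 < δ) (hkδ : k * δ = ID)
    (hnn : 0 ≤ QD - 2 * k * ID + k ^ 2 * δ) : ID ^ 2 ≤ δ * QD := by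
  rw [← hkδ] at hnn ⊢
  nlinarith [mul_nonneg h0.le hnn]

lemma alg_sum {s xb yb ab : ℝ} (hs0 : 0 ≤ s) (hs1 : s < 1) (hxb0 : 0 ≤ xb)
    (hyb0 : 0 ≤ yb) (hab0 : 0 ≤ ab) (hxy : xb ^ 2 + yb ^ 2 = ab ^ 2) :
    s * xb + (1 - s) * yb ≤ ab := by
  have h1 : (s * xb + (1 - s) * yb) ^ 2 ≤ (s ^ 2 + (1 - s) ^ 2) * (xb ^ 2 + yb ^ 2) := by
    nlinarith [sq_nonneg (s * yb - (1 - s) * xb)]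
  have h2 : s ^ 2 + (1 - s) ^ 2 ≤ 1 := by nlinarith
  have h3 : (s * xb + (1 - s) * yb) ^ 2 ≤ ab ^ 2 := by
    nlinarith [sq_nonneg xb, sq_nonneg yb]
  have h4 : 0 ≤ s * xb + (1 - s) * yb := by
    have := mul_nonneg hs0 hxb0
    have := mul_nonneg (by linarith : (0:ℝ) ≤ 1 - s) hyb0
    linarith
  calc s * xb + (1 - s) * yb = Real.sqrt ((s * xb + (1 - s) * yb) ^ 2) :=
        (Real.sqrt_sq h4).symm
    _ ≤ Real.sqrt (ab ^ 2) := Real.sqrt_le_sqrt h3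
    _ = ab := Real.sqrt_sq hab0

lemma alg_sqrtA {QD δ c A ID : ℝ} (hQD0 : 0 ≤ QD) (h0 : 0 < δ) (hc0 : 0 ≤ c) (hA0 : 0 < A)
    (hIDle : ID ≤ Real.sqrt δ * Real.sqrt QD) (hAle : A ≤ QD + 2 * c * ID + c ^ 2 * δ) :
    Real.sqrt A ≤ Real.sqrt QD + c * Real.sqrt δ := by
  have e1 : (Real.sqrt QD) ^ 2 = QD := Real.sq_sqrt hQD0
  have e2 : (Real.sqrt δ) ^ 2 = δ := Real.sq_sqrt h0.le
  have h1 : A ≤ (Real.sqrt QD + c * Real.sqrt δ) ^ 2 := by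
    nlinarith [mul_le_mul_of_nonneg_left hIDle hc0, Real.sqrt_nonneg QD, Real.sqrt_nonneg δ]
  have h2 : 0 ≤ Real.sqrt QD + c * Real.sqrt δ := by positivity
  calc Real.sqrt A ≤ Real.sqrt ((Real.sqrt QD + c * Real.sqrt δ) ^ 2) := Real.sqrt_le_sqrt h1
    _ = Real.sqrt QD + c * Real.sqrt δ := Real.sqrt_sq h2

lemma alg_sq_le {a b : ℝ} (h : |a| ≤ b) : a ^ 2 ≤ b ^ 2 := by
  nlinarith [abs_nonneg a, sq_abs a]

/-- Main lower bound construction. -/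
lemma aux_main {Ω D : Set (EuclideanSpace ℝ (Fin N))} (hN : N ≠ 0) (hΩo : IsOpen Ω)
    (hb : IsBounded Ω) (hD : MeasurableSet D) (hsub : D ⊆ Ω) {β δ ε : ℝ}
    (hvolD : (volume D).toReal = δ) (h0 : 0 < δ) (hβ : 0 < β) (hε1 : δ / β < ε)
    (hε2 : δ + ε < (volume Ω).toReal) {q : ℝ} (hq : q ∈ lambdaSet Ω D β) :
    Mdrop Ω (δ + ε) * (1 - Real.sqrt (δ / (ε * β))) ^ 2 ≤ q := by
  have hΩm : MeasurableSet Ω := hΩo.measurableSet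
  have hΩfin : volume Ω ≠ ⊤ := hb.measure_lt_top.ne
  have hε : 0 < ε := lt_trans (by positivity) hε1
  have hδεβ : δ < ε * β := by
    rw [div_lt_iff₀ hβ] at hε1
    linarith [hε1]
  obtain ⟨u, ⟨K, hK⟩, hlt, hqval⟩ := hq
  set A : ℝ := ∫ x in D, u x ^ 2 with hA
  set B : ℝ := ∫ x in Ω \ D, u x ^ 2 with hB
  set Nu : ℝ := ∫ x in Ω, ‖fderiv ℝ u x‖ ^ 2 with hNu
  have hden : 0 < A - β * B := by linarith [hlt]
  have hB0 : 0 ≤ B :=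
    setIntegral_nonneg (hΩm.diff hD) fun x _ => by positivity
  have hA0 : 0 < A := by nlinarith [mul_nonneg hβ.le hB0]
  have hIntU : IntegrableOn (fun x => u x ^ 2) Ω := aux_sq_int hK hΩo hb hΩm subset_rfl
  have hIntUD : IntegrableOn (fun x => u x ^ 2) (Ω \ D) := aux_sq_int hK hΩo hb
    (hΩm.diff hD) diff_subset
  -- the level and truncation
  set c : ℝ := Real.sqrt (B / ε) with hc
  have hc0 : 0 ≤ c := Real.sqrt_nonneg _
  have hc2 : c ^ 2 = B / ε := Real.sq_sqrt (by positivity)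
  set v : EuclideanSpace ℝ (Fin N) → ℝ := fun x => max (|u x| - c) 0 with hv
  have hvlip : LipschitzOnWith K v Ω := by
    have hφ : LipschitzWith 1 (fun t : ℝ => max (|t| - c) 0) := by
      apply LipschitzWith.of_dist_le_mul
      intro a b
      rw [Real.dist_eq, Real.dist_eq, NNReal.coe_one, one_mul]
      calc |max (|a| - c) 0 - max (|b| - c) 0| ≤ |(|a| - c) - (|b| - c)| :=
            abs_max_sub_max_le_abs _ _ _
        _ = |(|a| - |b|)| := by ring_nf
        _ ≤ |a - b| := abs_abs_sub_abs_le_abs_sub a b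
    have := hφ.comp_lipschitzOnWith hK
    rwa [one_mul] at this
  have hv0 : ∀ x, 0 ≤ v x := fun x => le_max_right _ _
  -- the open set ω
  set ω : Set (EuclideanSpace ℝ (Fin N)) := Ω ∩ (fun x => |u x|) ⁻¹' (Ioi c) with hω
  have hωo : IsOpen ω := (hK.continuousOn.abs).isOpen_inter_preimage hΩo isOpen_Ioi
  have hωsub : ω ⊆ Ω := inter_subset_left
  have hωm : MeasurableSet ω := hωo.measurableSet
  have hDfin : volume D ≠ ⊤ := ((measure_mono hsub).trans_lt hb.measure_lt_top).ne
  have hωfin : volume ω ≠ ⊤ := ((measure_mono hωsub).trans_lt hb.measure_lt_top).ne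
  -- measure of ω
  have hωD : (volume (ω \ D)).toReal ≤ ε := by
    by_cases hBzero : B = 0
    · have hczero : c = 0 := by
        rw [hc, hBzero, zero_div, Real.sqrt_zero]
      have hae : (fun x => u x ^ 2) =ᵐ[volume.restrict (Ω \ D)] 0 :=
        (integral_eq_zero_iff_of_nonneg (fun x => by positivity) hIntUD).1
          (by rw [← hB]; exact hBzero)
      have hnull : (volume.restrict (Ω \ D)) {x | ¬ u x ^ 2 = 0} = 0 := by
        have := hae
        rw [Filter.EventuallyEq, ae_iff] at this
        simpa using this
      have hzero2 : volume (ω \ D) = 0 := by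
        have hrw : volume (ω \ D) = (volume.restrict (Ω \ D)) ω := by
          rw [Measure.restrict_apply hωm]
          congr 1
          ext x
          constructor
          · rintro ⟨hxω, hxD⟩
            exact ⟨hxω, hωsub hxω, hxD⟩
          · rintro ⟨hxω, _, hxD⟩
            exact ⟨hxω, hxD⟩
        rw [hrw]
        refine measure_mono_null ?_ hnull
        rintro x ⟨_, hxc⟩
        have : c < |u x| := hxc
        have hune : u x ≠ 0 := by
          intro h; rw [h] at this; simp at this; linarith
        simp [pow_eq_zero_iff]
        exact hune
      rw [hzero2]
      simpa using hε.le
    · have hBpos : 0 < B := lt_of_le_of_ne hB0 (Ne.symm hBzero)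
      have hcpos : 0 < c := Real.sqrt_pos.2 (by positivity)
      have hc2pos : 0 < c ^ 2 := by positivity
      have hsubset : ω \ D ⊆ Ω \ D := fun x hx => ⟨hωsub hx.1, hx.2⟩
      have hωDm : MeasurableSet (ω \ D) := hωm.diff hD
      have hωDfin : volume (ω \ D) ≠ ⊤ :=
        ((measure_mono (hsubset.trans diff_subset)).trans_lt hb.measure_lt_top).ne
      have h1 : c ^ 2 * (volume (ω \ D)).toReal ≤ ∫ x in ω \ D, u x ^ 2 := by
        have := setIntegral_mono_on (integrableOn_const hωDfin)
          (hIntUD.mono_set hsubset) hωDm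
          (f := fun _ => c ^ 2) (fun x hx => by
            have hxc : c < |u x| := hx.1.2
            have h2 : c ^ 2 ≤ |u x| ^ 2 := by
              have := pow_le_pow_left₀ hc0 hxc.le 2
              linarith
            rwa [sq_abs] at h2)
        rwa [setIntegral_const, smul_eq_mul, mul_comm (volume.real _)] at this
      have h2 : ∫ x in ω \ D, u x ^ 2 ≤ B :=
        setIntegral_mono_set hIntUD (Filter.Eventually.of_forall fun x => by positivity)
          (HasSubset.Subset.eventuallyLE hsubset)
      have h3 : (volume (ω \ D)).toReal ≤ B / c ^ 2 := by
        rw [le_div_iff₀ hc2pos]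
        calc (volume (ω \ D)).toReal * c ^ 2 = c ^ 2 * (volume (ω \ D)).toReal := by ring
          _ ≤ ∫ x in ω \ D, u x ^ 2 := h1
          _ ≤ B := h2
      have h4 : B / c ^ 2 = ε := by
        rw [hc2]
        field_simp
      linarith
  have hωvol : (volume ω).toReal ≤ δ + ε := by
    have hsplit := measure_inter_add_diff ω hD (μ := volume)
    have hfin1 : volume (ω ∩ D) ≠ ⊤ :=
      ((measure_mono inter_subset_right).trans_lt hDfin.lt_top).ne
    have hfin2 : volume (ω \ D) ≠ ⊤ :=
      ((measure_mono diff_subset).trans_lt hωfin.lt_top).ne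
    have : (volume ω).toReal = (volume (ω ∩ D)).toReal + (volume (ω \ D)).toReal := by
      rw [← ENNReal.toReal_add hfin1 hfin2, hsplit]
    rw [this]
    have h1 : (volume (ω ∩ D)).toReal ≤ δ := by
      rw [← hvolD]
      exact ENNReal.toReal_mono hDfin (measure_mono inter_subset_right)
    linarith
  -- enlarge ω to exact volume δ + ε
  obtain ⟨U, hUo, hωU, hvolU⟩ := aux_exists_open hN hΩo hb hωo hωsub hωvol hε2
  set D₂ : Set (EuclideanSpace ℝ (Fin N)) := U ∩ Ω with hD₂
  -- v is admissible for μ(D₂, Ω)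
  have hvzero : ∀ x ∈ Ω \ D₂, v x = 0 := by
    rintro x ⟨hxΩ, hxD₂⟩
    have hxω : x ∉ ω := fun h => hxD₂ (hωU h)
    have : ¬ c < |u x| := fun h => hxω ⟨hxΩ, h⟩
    push_neg at this
    exact max_eq_right (by linarith)
  -- integrals of v
  have hIntV2 : IntegrableOn (fun x => v x ^ 2) Ω := aux_sq_int hvlip hΩo hb hΩm subset_rfl
  have hIntV2D : IntegrableOn (fun x => v x ^ 2) D := aux_sq_int hvlip hΩo hb hD hsub
  have hIntVD : IntegrableOn v D := by
    obtain ⟨C, hC⟩ := aux_lip_bound hvlip hb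
    refine Integrable.mono' (g := fun _ => C) (integrableOn_const hDfin)
      ((hvlip.continuousOn.mono hsub).aestronglyMeasurable hD) ?_
    exact (ae_restrict_iff' hD).2 (Filter.Eventually.of_forall fun x hx => hC x (hsub hx))
  set QD : ℝ := ∫ x in D, v x ^ 2 with hQD
  set ID : ℝ := ∫ x in D, v x with hID
  have hQD0 : 0 ≤ QD := setIntegral_nonneg hD fun x _ => by positivity
  have hID0 : 0 ≤ ID := setIntegral_nonneg hD fun x _ => hv0 x
  -- Cauchy–Schwarz : ID² ≤ δ QD
  have hCS : ID ^ 2 ≤ δ * QD := by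
    set k : ℝ := ID / δ with hk
    have hkδ : k * δ = ID := by rw [hk, div_mul_cancel₀ ID h0.ne']
    have hexp : ∫ x in D, (v x - k) ^ 2 = QD - 2 * k * ID + k ^ 2 * δ := by
      have heq : ∀ x, (v x - k) ^ 2 = (v x ^ 2 - 2 * k * v x) + k ^ 2 := by intro x; ring
      rw [show (fun x => (v x - k) ^ 2) = fun x => (v x ^ 2 - 2 * k * v x) + k ^ 2 from
        funext heq]
      have hint1 : IntegrableOn (fun x => v x ^ 2 - 2 * k * v x) D :=
        hIntV2D.sub (hIntVD.const_mul (2 * k))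
      have hint0 : IntegrableOn (fun x => 2 * k * v x) D := hIntVD.const_mul (2 * k)
      rw [integral_add hint1 (integrableOn_const hDfin),
        integral_sub hIntV2D hint0, integral_const_mul (2 * k) v,
        setIntegral_const, smul_eq_mul, ← hvolD, ← measureReal_def]
      ring
    have hnn : 0 ≤ ∫ x in D, (v x - k) ^ 2 := setIntegral_nonneg hD fun x _ => by positivity
    rw [hexp] at hnn
    exact alg_CS h0 hkδ hnn
  -- A ≤ QD + 2 c ID + c² δ
  have hAle : A ≤ QD + 2 * c * ID + c ^ 2 * δ := by
    have hrhs : ∫ x in D, ((v x ^ 2 + 2 * c * v x) + c ^ 2) = QD + 2 * c * ID + c ^ 2 * δ := by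
      have hint1 : IntegrableOn (fun x => v x ^ 2 + 2 * c * v x) D :=
        hIntV2D.add (hIntVD.const_mul (2 * c))
      have hint0 : IntegrableOn (fun x => 2 * c * v x) D := hIntVD.const_mul (2 * c)
      rw [integral_add hint1 (integrableOn_const hDfin),
        integral_add hIntV2D hint0, integral_const_mul (2 * c) v,
        setIntegral_const, smul_eq_mul, ← hvolD, ← measureReal_def]
      ring
    rw [hA, ← hrhs]
    have hint3 : IntegrableOn (fun x => (v x ^ 2 + 2 * c * v x) + c ^ 2) D :=
      (hIntV2D.add (hIntVD.const_mul (2 * c))).add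
        (integrableOn_const hDfin)
    refine setIntegral_mono_on (hIntU.mono_set hsub) hint3 hD (fun x hx => ?_)
    have hvc : |u x| ≤ v x + c := by
      have := le_max_left (|u x| - c) 0
      have hvx : v x = max (|u x| - c) 0 := rfl
      linarith [le_max_left (|u x| - c) (0:ℝ)]
    have h1 : u x ^ 2 ≤ (v x + c) ^ 2 := alg_sq_le hvc
    linarith
  -- the algebraic sqrt juggling
  set s : ℝ := Real.sqrt (δ / (ε * β)) with hs
  have hs0 : 0 ≤ s := Real.sqrt_nonneg _
  have hs2 : s ^ 2 = δ / (ε * β) := Real.sq_sqrt (by positivity)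
  have hs1 : s < 1 := alg_lt_one hδεβ (by positivity) hs2 hs0
  set xb : ℝ := Real.sqrt (β * B) with hxb
  set yb : ℝ := Real.sqrt (A - β * B) with hyb
  set ab : ℝ := Real.sqrt A with hab
  have hxb0 : 0 ≤ xb := Real.sqrt_nonneg _
  have hyb0 : 0 ≤ yb := Real.sqrt_nonneg _
  have hab0 : 0 ≤ ab := Real.sqrt_nonneg _
  have hxb2 : xb ^ 2 = β * B := Real.sq_sqrt (by positivity)
  have hyb2 : yb ^ 2 = A - β * B := Real.sq_sqrt hden.le
  have hab2 : ab ^ 2 = A := Real.sq_sqrt hA0.le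
  have hcs : c * Real.sqrt δ = s * xb := by
    rw [hc, hs, hxb, ← Real.sqrt_mul (by positivity), ← Real.sqrt_mul (by positivity)]
    congr 1
    field_simp
  have hsum : s * xb + (1 - s) * yb ≤ ab :=
    alg_sum hs0 hs1 hxb0 hyb0 hab0 (by rw [hxb2, hyb2, hab2]; ring)
  -- √A ≤ √QD + c√δ
  have hIDle : ID ≤ Real.sqrt δ * Real.sqrt QD := by
    calc ID = Real.sqrt (ID ^ 2) := (Real.sqrt_sq hID0).symm
      _ ≤ Real.sqrt (δ * QD) := Real.sqrt_le_sqrt hCS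
      _ = Real.sqrt δ * Real.sqrt QD := Real.sqrt_mul h0.le _
  have hsqrtA : ab ≤ Real.sqrt QD + c * Real.sqrt δ :=
    alg_sqrtA hQD0 h0 hc0 hA0 hIDle hAle
  have hQDge : (1 - s) ^ 2 * (A - β * B) ≤ QD := by
    have h1 : (1 - s) * yb ≤ Real.sqrt QD := by
      have := hsqrtA
      rw [hcs] at this
      linarith [hsum]
    have h2 : ((1 - s) * yb) ^ 2 ≤ (Real.sqrt QD) ^ 2 :=
      pow_le_pow_left₀ (mul_nonneg (by linarith) hyb0) h1 2
    rw [Real.sq_sqrt hQD0] at h2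
    calc (1 - s) ^ 2 * (A - β * B) = ((1 - s) * yb) ^ 2 := by rw [mul_pow, hyb2]
      _ ≤ QD := h2
  -- ∫_Ω v² and its positivity
  set Qv : ℝ := ∫ x in Ω, v x ^ 2 with hQv
  have hQvge : QD ≤ Qv :=
    setIntegral_mono_set hIntV2 (Filter.Eventually.of_forall fun x => by positivity)
      (HasSubset.Subset.eventuallyLE hsub)
  have hQvlow : (1 - s) ^ 2 * (A - β * B) ≤ Qv := le_trans hQDge hQvge
  have hQvpos : 0 < Qv :=
    lt_of_lt_of_le (mul_pos (pow_pos (by linarith) 2) hden) hQvlow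
  -- gradient comparison
  set Nv : ℝ := ∫ x in Ω, ‖fderiv ℝ v x‖ ^ 2 with hNv
  have hNv0 : 0 ≤ Nv := setIntegral_nonneg hΩm fun x _ => by positivity
  have hgrad : ∀ x ∈ Ω, ‖fderiv ℝ v x‖ ≤ ‖fderiv ℝ u x‖ := by
    intro x hx
    by_cases hvx : v x = 0
    · have hmin : IsLocalMin v x := Filter.Eventually.of_forall fun y => by
        rw [hvx]; exact hv0 y
      rw [hmin.fderiv_eq_zero]
      simp
    · have hvpos : 0 < v x := lt_of_le_of_ne (hv0 x) (Ne.symm hvx)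
      have hcu : c < |u x| := by
        by_contra h
        push_neg at h
        exact hvx (max_eq_right (by linarith))
      have hcontx : ContinuousAt u x := hK.continuousOn.continuousAt (hΩo.mem_nhds hx)
      rcases lt_trichotomy (u x) 0 with hux | hux | hux
      · -- u x < 0, so u x < -c
        have huxc : u x < -c := by
          rw [abs_of_neg hux] at hcu; linarith
        have hev : ∀ᶠ y in 𝓝 x, u y < -c := hcontx.eventually (isOpen_Iio.mem_nhds huxc)
        have heq : v =ᶠ[𝓝 x] fun y => -u y - c := hev.mono fun y hy => by
          have hyneg : u y < 0 := lt_of_lt_of_le hy (by linarith)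
          have habs : |u y| = -u y := abs_of_neg hyneg
          show max (|u y| - c) 0 = -u y - c
          rw [habs]
          exact max_eq_left (by linarith)
        rw [heq.fderiv_eq]
        have : fderiv ℝ (fun y => -u y - c) x = -fderiv ℝ u x := by
          rw [fderiv_sub_const, fderiv_fun_neg]
        rw [this, norm_neg]
      · exfalso
        rw [hux] at hcu
        simp at hcu
        linarith
      · have huxc : c < u x := by rw [abs_of_pos hux] at hcu; exact hcu
        have hev : ∀ᶠ y in 𝓝 x, c < u y := hcontx.eventually (isOpen_Ioi.mem_nhds huxc)
        have heq : v =ᶠ[𝓝 x] fun y => u y - c := hev.mono fun y hy => by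
          have hypos : 0 < u y := lt_of_le_of_lt hc0 hy
          have habs : |u y| = u y := abs_of_pos hypos
          show max (|u y| - c) 0 = u y - c
          rw [habs]
          exact max_eq_left (by linarith)
        rw [heq.fderiv_eq, fderiv_sub_const]
  have hNvle : Nv ≤ Nu := by
    refine setIntegral_mono_on (aux_fderiv_int hvlip hΩo hb) (aux_fderiv_int hK hΩo hb)
      hΩm (fun x hx => ?_)
    exact pow_le_pow_left₀ (norm_nonneg _) (hgrad x hx) 2
  -- Mdrop bound
  have hmem2 : Nv / Qv ∈ muSet Ω D₂ := ⟨v, ⟨K, hvlip⟩, hvzero, hQvpos.ne', rfl⟩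
  have hmuD₂ : muEV Ω D₂ ≤ Nv / Qv := by
    rw [muEV_eq]
    exact csInf_le ⟨0, fun r hr => aux_muSet_elt_nonneg hΩm hr⟩ hmem2
  have hMd : Mdrop Ω (δ + ε) ≤ Nv / Qv := by
    refine le_trans (csInf_le ⟨0, ?_⟩ ?_) hmuD₂
    · rintro r ⟨D', _, _, _, rfl⟩
      exact aux_muEV_nonneg hΩm
    · exact ⟨D₂, inter_subset_right, ⟨U, hUo, rfl⟩, hvolU, rfl⟩
  have hMd0 : 0 ≤ Mdrop Ω (δ + ε) := by
    refine Real.sInf_nonneg ?_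
    rintro r ⟨D', _, _, _, rfl⟩
    exact aux_muEV_nonneg hΩm
  -- final algebra
  have hfinal : (Nv / Qv) * (1 - s) ^ 2 ≤ Nu / (A - β * B) := by
    rw [div_mul_eq_mul_div, div_le_div_iff₀ hQvpos hden]
    calc Nv * (1 - s) ^ 2 * (A - β * B) = Nv * ((1 - s) ^ 2 * (A - β * B)) := by ring
      _ ≤ Nv * Qv := mul_le_mul_of_nonneg_left hQvlow hNv0
      _ ≤ Nu * Qv := mul_le_mul_of_nonneg_right hNvle hQvpos.le
  have h1 : Mdrop Ω (δ + ε) * (1 - s) ^ 2 ≤ (Nv / Qv) * (1 - s) ^ 2 :=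
    mul_le_mul_of_nonneg_right hMd (by positivity)
  rw [hqval]
  calc Mdrop Ω (δ + ε) * (1 - s) ^ 2 ≤ (Nv / Qv) * (1 - s) ^ 2 := h1
    _ ≤ Nu / (A - β * B) := hfinal

/-- the sandwich inequality
`M(δ+ε)(1 − √(δ/(εβ)))² ≤ Λ(β,δ) ≤ M(δ)`. -/
theorem sandwich {N : ℕ} (Ω : Set (EuclideanSpace ℝ (Fin N))) (hΩ : IsLipschitzDomain Ω)
    (δ β ε : ℝ) (h0 : 0 < δ) (h1 : δ < (volume Ω).toReal)
    (hβ : δ / ((volume Ω).toReal - δ) < β)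
    (hε1 : δ / β < ε) (hε2 : ε < (volume Ω).toReal - δ) :
    Mdrop Ω (δ + ε) * (1 - Real.sqrt (δ / (ε * β))) ^ 2 ≤ LambdaOpt Ω β δ ∧
      LambdaOpt Ω β δ ≤ Mdrop Ω δ := by
  obtain ⟨hΩo, hΩb, -, -⟩ := hΩ
  have hΩm : MeasurableSet Ω := hΩo.measurableSet
  have hβpos : 0 < β := lt_trans (div_pos h0 (by linarith)) hβ
  have hεpos : 0 < ε := lt_trans (div_pos h0 hβpos) hε1
  constructor
  · -- lower bound
    by_cases hS : ∃ D : Set (EuclideanSpace ℝ (Fin N)),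
      D ⊆ Ω ∧ MeasurableSet D ∧ (volume D).toReal = δ
    · show _ ≤ LambdaOpt Ω β δ
      unfold LambdaOpt
      apply le_csInf
      · obtain ⟨D₀, h₀1, h₀2, h₀3⟩ := hS
        exact ⟨lambdaEV Ω D₀ β, D₀, h₀1, h₀2, h₀3, rfl⟩
      · rintro r ⟨D, hDsub, hDm, hDvol, rfl⟩
        have hDpos : 0 < (volume D).toReal := by rw [hDvol]; exact h0
        have hN : N ≠ 0 := aux_dim_pos hDsub hDpos (by rw [hDvol]; exact h1)
        have hnel := aux_lambdaSet_nonempty hΩo hΩb hDm hDsub hDpos hβpos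
        show _ ≤ lambdaEV Ω D β
        unfold lambdaEV
        refine le_csInf hnel fun q hq => ?_
        exact aux_main hN hΩo hΩb hDm hDsub hDvol h0 hβpos hε1 (by linarith) hq
    · have hSempty : {r : ℝ | ∃ D : Set (EuclideanSpace ℝ (Fin N)),
          D ⊆ Ω ∧ MeasurableSet D ∧ (volume D).toReal = δ ∧ r = lambdaEV Ω D β} = ∅ := by
        rw [eq_empty_iff_forall_notMem]
        rintro r ⟨D, hd1, hd2, hd3, -⟩
        exact hS ⟨D, hd1, hd2, hd3⟩
      have hT₂ : {r : ℝ | ∃ D : Set (EuclideanSpace ℝ (Fin N)),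
          D ⊆ Ω ∧ RelOpen Ω D ∧ (volume D).toReal = δ + ε ∧ r = muEV Ω D} = ∅ := by
        rw [eq_empty_iff_forall_notMem]
        rintro r ⟨D, hd1, ⟨U, hUo, hUeq⟩, hd3, -⟩
        have hDpos : 0 < (volume D).toReal := by rw [hd3]; positivity
        have hN : N ≠ 0 := aux_dim_pos hd1 hDpos (by rw [hd3]; linarith)
        obtain ⟨U', hU'o, -, hvol'⟩ := aux_exists_open hN hΩo hΩb isOpen_empty
          (empty_subset Ω) (t := δ) (by simp [h0.le]) h1
        exact hS ⟨U' ∩ Ω, inter_subset_right, hU'o.measurableSet.inter hΩm, hvol'⟩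
      unfold LambdaOpt Mdrop
      rw [hSempty, hT₂, Real.sInf_empty]
      simp
  · -- upper bound
    by_cases hS : ∃ D : Set (EuclideanSpace ℝ (Fin N)),
      D ⊆ Ω ∧ MeasurableSet D ∧ (volume D).toReal = δ
    · obtain ⟨D₀, hD₀sub, hD₀m, hD₀vol⟩ := hS
      have hD₀pos : 0 < (volume D₀).toReal := by rw [hD₀vol]; exact h0
      have hN : N ≠ 0 := aux_dim_pos hD₀sub hD₀pos (by rw [hD₀vol]; exact h1)
      obtain ⟨U₁, hU₁o, -, hvol₁⟩ := aux_exists_open hN hΩo hΩb isOpen_empty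
        (empty_subset Ω) (t := δ) (by simp [h0.le]) h1
      show LambdaOpt Ω β δ ≤ Mdrop Ω δ
      unfold Mdrop
      apply le_csInf
      · exact ⟨muEV Ω (U₁ ∩ Ω), U₁ ∩ Ω, inter_subset_right, ⟨U₁, hU₁o, rfl⟩, hvol₁, rfl⟩
      · rintro t ⟨D, hDsub, ⟨U, hUo, hUeq⟩, hDvol, rfl⟩
        have hDm : MeasurableSet D := by rw [hUeq]; exact hUo.measurableSet.inter hΩm
        have hDopen : IsOpen D := by rw [hUeq]; exact hUo.inter hΩo
        have hDpos : 0 < (volume D).toReal := by rw [hDvol]; exact h0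
        have hmuNe := aux_muSet_nonempty hΩo hΩb hDopen hDsub hDpos
        have hle := aux_lambda_le_mu hΩo hΩb hDm hDsub hmuNe hβpos
        have hbdd : BddBelow {r : ℝ | ∃ D : Set (EuclideanSpace ℝ (Fin N)),
            D ⊆ Ω ∧ MeasurableSet D ∧ (volume D).toReal = δ ∧ r = lambdaEV Ω D β} := by
          refine ⟨0, ?_⟩
          rintro r ⟨D', -, -, -, rfl⟩
          exact aux_lambdaEV_nonneg hΩm
        have hmem : lambdaEV Ω D β ∈ {r : ℝ | ∃ D : Set (EuclideanSpace ℝ (Fin N)),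
            D ⊆ Ω ∧ MeasurableSet D ∧ (volume D).toReal = δ ∧ r = lambdaEV Ω D β} :=
          ⟨D, hDsub, hDm, hDvol, rfl⟩
        exact le_trans (csInf_le hbdd hmem) hle
    · have hSempty : {r : ℝ | ∃ D : Set (EuclideanSpace ℝ (Fin N)),
          D ⊆ Ω ∧ MeasurableSet D ∧ (volume D).toReal = δ ∧ r = lambdaEV Ω D β} = ∅ := by
        rw [eq_empty_iff_forall_notMem]
        rintro r ⟨D, hd1, hd2, hd3, -⟩
        exact hS ⟨D, hd1, hd2, hd3⟩
      show LambdaOpt Ω β δ ≤ Mdrop Ω δ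
      unfold LambdaOpt
      rw [hSempty, Real.sInf_empty]
      exact aux_Mdrop_nonneg hΩm


end
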